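/- arXiv:1112.5968 — 2 statements merged into one kernel-verified Lean document; each statement's English description precedes it below -/
import Mathlib

section
/- Let C be a reproducing normal cone in a Banach space X, and let h : X → X be continuous, positively homogeneous, and order-preserving with respect to C. Then h(C) ⊆ C, h(-C) ⊆ -C, and for every x ∈ X, limsup_k ‖h^k(x)‖^{1/k} ≤ max(r_C(h), r_{-C}(h)), where r_D(h) = sup_{y ∈ D} limsup_k ‖h^k(y)‖^{1/k}. Hence r_X(h) = max(r_C(h), r_{-C}(h)). -/
open Set Filter Pointwise

/-- The cone spectral radius `r_D(h) = sup_{x ∈ D} limsup_k ‖h^k(x)‖^{1/k}`. -/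
noncomputable def coneSpectralRadius {X : Type*} [NormedAddCommGroup X]
    (D : Set X) (h : X → X) : ENNReal :=
  ⨆ (x : X) (_ : x ∈ D),
    Filter.limsup (fun k : ℕ => ENNReal.ofReal (‖h^[k] x‖ ^ ((k : ℝ)⁻¹))) atTop

/-!
Write `x = y - z` with `y, z ∈ C`, so that `-z ≤ x ≤ y`. Every iterate of `h` preserves the order,
hence `h^k(-z) ≤ h^k(x) ≤ h^k(y)`, and normality bounds `‖h^k(x)‖` by a constant multiple of
`max ‖h^k(y)‖ ‖h^k(-z)‖`. The constant disappears after taking `k`-th roots, and `h 0 = 0` makes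
`C` and `-C` invariant.
-/

section OrderPreserving

variable {X : Type*} [AddCommGroup X] {C : Set X} {h : X → X}

theorem iterate_sub_mem_of_sub_mem (hmono : ∀ x y : X, y - x ∈ C → h y - h x ∈ C) (k : ℕ)
    {x y : X} (hxy : y - x ∈ C) : h^[k] y - h^[k] x ∈ C := by
  induction k with
  | zero => exact hxy
  | succ k ih =>
    rw [Function.iterate_succ_apply', Function.iterate_succ_apply']
    exact hmono _ _ ih

theorem mapsTo_of_sub_mem (hmono : ∀ x y : X, y - x ∈ C → h y - h x ∈ C) (h0 : h 0 = 0) :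
    MapsTo h C C := fun x hx => by
  simpa [h0] using hmono 0 x (by simpa using hx)

theorem mapsTo_neg_of_sub_mem (hmono : ∀ x y : X, y - x ∈ C → h y - h x ∈ C) (h0 : h 0 = 0) :
    MapsTo h (-C) (-C) := fun x hx => by
  simpa [h0] using hmono x 0 (by simpa using hx)

end OrderPreserving

theorem map_zero_of_pos_homogeneous {X : Type*} [AddCommGroup X] [Module ℝ X] {h : X → X}
    (hhom : ∀ t : ℝ, 0 < t → ∀ x : X, h (t • x) = t • h x) : h 0 = 0 := by
  have := hhom 2 two_pos 0
  rwa [smul_zero, two_smul, left_eq_add] at this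

theorem norm_le_of_sub_mem_of_sub_mem {X : Type*} [SeminormedAddCommGroup X] {C : Set X} {M : ℝ}
    (hM : 0 ≤ M) (hnormal : ∀ x y : X, x ∈ C → y - x ∈ C → ‖x‖ ≤ M * ‖y‖)
    {u v w : X} (huv : v - u ∈ C) (hvw : w - v ∈ C) :
    ‖v‖ ≤ 2 * (M + 1) * max ‖u‖ ‖w‖ := by
  have hvu : ‖v - u‖ ≤ M * ‖w - u‖ := hnormal _ _ huv (by simpa using hvw)
  calc ‖v‖ ≤ ‖v - u‖ + ‖u‖ := norm_le_norm_sub_add v u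
    _ ≤ M * (‖w‖ + ‖u‖) + ‖u‖ := by gcongr; exact hvu.trans (by gcongr; exact norm_sub_le w u)
    _ ≤ 2 * (M + 1) * max ‖u‖ ‖w‖ := by
      nlinarith [le_max_left ‖u‖ ‖w‖, le_max_right ‖u‖ ‖w‖, norm_nonneg u]

open Topology in
theorem tendsto_ofReal_rpow_inv_natCast {K : ℝ} (hK : 0 < K) :
    Tendsto (fun k : ℕ => ENNReal.ofReal (K ^ (k : ℝ)⁻¹)) atTop (𝓝 1) := by
  have hexp : Tendsto (fun k : ℕ => (k : ℝ)⁻¹) atTop (𝓝 0) :=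
    tendsto_inv_atTop_zero.comp tendsto_natCast_atTop_atTop
  simpa [Function.comp_def] using (ENNReal.continuous_ofReal.tendsto _).comp
    ((Real.continuousAt_const_rpow hK.ne').tendsto.comp hexp)

theorem limsup_ofReal_rpow_inv_le_of_le_const_mul {f g : ℕ → ℝ} {K : ℝ} (hK : 0 < K)
    (hf : ∀ k, 0 ≤ f k) (hfg : ∀ k, f k ≤ K * g k) :
    limsup (fun k : ℕ => ENNReal.ofReal (f k ^ (k : ℝ)⁻¹)) atTop ≤
      limsup (fun k : ℕ => ENNReal.ofReal (g k ^ (k : ℝ)⁻¹)) atTop := by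
  set c := fun k : ℕ => ENNReal.ofReal (K ^ (k : ℝ)⁻¹)
  have hc : limsup c atTop = 1 := (tendsto_ofReal_rpow_inv_natCast hK).limsup_eq
  have hpointwise : ∀ k : ℕ, ENNReal.ofReal (f k ^ (k : ℝ)⁻¹) ≤
      (c * fun k => ENNReal.ofReal (g k ^ (k : ℝ)⁻¹)) k := fun k => by
    have hg : 0 ≤ g k := nonneg_of_mul_nonneg_right ((hf k).trans (hfg k)) hK
    rw [Pi.mul_apply, ← ENNReal.ofReal_mul (by positivity), ← Real.mul_rpow hK.le hg]
    exact ENNReal.ofReal_le_ofReal (Real.rpow_le_rpow (hf k) (hfg k) (by positivity))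
  calc _ ≤ limsup (c * fun k => ENNReal.ofReal (g k ^ (k : ℝ)⁻¹)) atTop :=
        limsup_le_limsup (.of_forall hpointwise)
    _ ≤ limsup c atTop * limsup (fun k : ℕ => ENNReal.ofReal (g k ^ (k : ℝ)⁻¹)) atTop :=
        ENNReal.limsup_mul_le' (by simp [hc]) (by simp [hc])
    _ = _ := by rw [hc, one_mul]

theorem limsup_ofReal_max_rpow_inv {a b : ℕ → ℝ} (ha : ∀ k, 0 ≤ a k) (hb : ∀ k, 0 ≤ b k) :
    limsup (fun k : ℕ => ENNReal.ofReal (max (a k) (b k) ^ (k : ℝ)⁻¹)) atTop =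
      max (limsup (fun k : ℕ => ENNReal.ofReal (a k ^ (k : ℝ)⁻¹)) atTop)
        (limsup (fun k : ℕ => ENNReal.ofReal (b k ^ (k : ℝ)⁻¹)) atTop) := by
  simp_rw [Real.rpow_max (ha _) (hb _) (inv_nonneg.2 (Nat.cast_nonneg _)), ENNReal.ofReal_max]
  exact limsup_max

section ConeSpectralRadius

variable {X : Type*} [NormedAddCommGroup X] {D E : Set X} {h : X → X}

theorem limsup_le_coneSpectralRadius {x : X} (hx : x ∈ D) :
    limsup (fun k : ℕ => ENNReal.ofReal (‖h^[k] x‖ ^ (k : ℝ)⁻¹)) atTop ≤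
      coneSpectralRadius D h :=
  le_iSup₂ (f := fun x (_ : x ∈ D) =>
    limsup (fun k : ℕ => ENNReal.ofReal (‖h^[k] x‖ ^ (k : ℝ)⁻¹)) atTop) x hx

theorem coneSpectralRadius_mono (hDE : D ⊆ E) : coneSpectralRadius D h ≤ coneSpectralRadius E h :=
  iSup₂_le fun _ hx => limsup_le_coneSpectralRadius (hDE hx)

end ConeSpectralRadius

theorem spectral_radius_on_X_eq_max_general
    {X : Type*} [NormedAddCommGroup X] [NormedSpace ℝ X]
    (C : Set X)
    (M : ℝ) (hM : 0 < M)
    (hnormal : ∀ x y : X, x ∈ C → y - x ∈ C → ‖x‖ ≤ M * ‖y‖)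
    (hrepro : ∀ x : X, ∃ y ∈ C, ∃ z ∈ C, x = y - z)
    (h : X → X)
    (hhom : ∀ t : ℝ, 0 < t → ∀ x : X, h (t • x) = t • h x)
    (hmono : ∀ x y : X, y - x ∈ C → h y - h x ∈ C) :
    MapsTo h C C ∧ MapsTo h (-C) (-C) ∧
    (∀ x : X,
      Filter.limsup (fun k : ℕ => ENNReal.ofReal (‖h^[k] x‖ ^ ((k : ℝ)⁻¹))) atTop ≤
        max (coneSpectralRadius C h) (coneSpectralRadius (-C) h)) ∧
    coneSpectralRadius (Set.univ : Set X) h =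
      max (coneSpectralRadius C h) (coneSpectralRadius (-C) h) := by
  have h0 : h 0 = 0 := map_zero_of_pos_homogeneous hhom
  have hbound : ∀ x : X, limsup (fun k : ℕ => ENNReal.ofReal (‖h^[k] x‖ ^ (k : ℝ)⁻¹)) atTop ≤
      max (coneSpectralRadius C h) (coneSpectralRadius (-C) h) := by
    intro x
    obtain ⟨y, hy, z, hz, rfl⟩ := hrepro x
    have hsandwich : ∀ k, ‖h^[k] (y - z)‖ ≤ 2 * (M + 1) * max ‖h^[k] (-z)‖ ‖h^[k] y‖ := fun k =>
      norm_le_of_sub_mem_of_sub_mem hM.le hnormal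
        (iterate_sub_mem_of_sub_mem hmono k (by simpa using hy))
        (iterate_sub_mem_of_sub_mem hmono k (by simpa using hz))
    calc _ ≤ limsup (fun k : ℕ =>
          ENNReal.ofReal (max ‖h^[k] (-z)‖ ‖h^[k] y‖ ^ (k : ℝ)⁻¹)) atTop :=
          limsup_ofReal_rpow_inv_le_of_le_const_mul (by positivity) (fun _ => norm_nonneg _)
            hsandwich
      _ = _ := limsup_ofReal_max_rpow_inv (fun _ => norm_nonneg _) (fun _ => norm_nonneg _)
      _ ≤ max (coneSpectralRadius (-C) h) (coneSpectralRadius C h) :=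
          max_le_max (limsup_le_coneSpectralRadius (neg_mem_neg.2 hz))
            (limsup_le_coneSpectralRadius hy)
      _ = _ := max_comm _ _
  refine ⟨mapsTo_of_sub_mem hmono h0, mapsTo_neg_of_sub_mem hmono h0, hbound, ?_⟩
  exact le_antisymm (iSup₂_le fun x _ => hbound x)
    (max_le (coneSpectralRadius_mono (subset_univ C)) (coneSpectralRadius_mono (subset_univ _)))

theorem spectral_radius_on_X_eq_max
    {X : Type*} [NormedAddCommGroup X] [NormedSpace ℝ X] [CompleteSpace X]
    (C : Set X)
    (hclosed : IsClosed C) (hconv : Convex ℝ C)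
    (hcone : ∀ t : ℝ, 0 ≤ t → ∀ x ∈ C, t • x ∈ C)
    (hpointed : ∀ x ∈ C, -x ∈ C → x = 0)
    (M : ℝ) (hM : 0 < M)
    (hnormal : ∀ x y : X, x ∈ C → y - x ∈ C → ‖x‖ ≤ M * ‖y‖)
    (hrepro : ∀ x : X, ∃ y ∈ C, ∃ z ∈ C, x = y - z)
    (h : X → X) (hcont : Continuous h)
    (hhom : ∀ t : ℝ, 0 < t → ∀ x : X, h (t • x) = t • h x)
    (hmono : ∀ x y : X, y - x ∈ C → h y - h x ∈ C) :
    MapsTo h C C ∧ MapsTo h (-C) (-C) ∧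
    (∀ x : X,
      Filter.limsup (fun k : ℕ => ENNReal.ofReal (‖h^[k] x‖ ^ ((k : ℝ)⁻¹))) atTop ≤
        max (coneSpectralRadius C h) (coneSpectralRadius (-C) h)) ∧
    coneSpectralRadius (Set.univ : Set X) h =
      max (coneSpectralRadius C h) (coneSpectralRadius (-C) h) :=
  spectral_radius_on_X_eq_max_general C M hM hnormal hrepro h hhom hmono
end

section
/- Let C be a proper cone with nonempty interior in a Banach space X, and let (f_a)_{a∈A} be a family of positively homogeneous maps X → X admitting a lower selection with infimum f (for each x there is a_x with f(x) = f_{a_x}(x) ≤ f_b(x) for all b). Then cw(f) = inf_{a∈A} cw(f_a), where cw(g) = inf{λ > 0 : ∃ x ∈ int C, g(x) ≤ λx} is the Collatz-Wielandt number. -/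
open Set

/-- The Collatz-Wielandt number `cw(g) = inf {λ > 0 : ∃ x ∈ int C, g(x) ≤ λ x}`. -/
noncomputable def collatzWielandt {X : Type*} [NormedAddCommGroup X] [NormedSpace ℝ X]
    (C : Set X) (g : X → X) : ENNReal :=
  ⨅ (l : ℝ) (_ : 0 < l ∧ ∃ x ∈ interior C, l • x - g x ∈ C), ENNReal.ofReal l

lemma cone_add_mem {X : Type*} [NormedAddCommGroup X] [NormedSpace ℝ X]
    {C : Set X} (hconv : Convex ℝ C)
    (hcone : ∀ t : ℝ, 0 ≤ t → ∀ x ∈ C, t • x ∈ C)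
    {x y : X} (hx : x ∈ C) (hy : y ∈ C) : x + y ∈ C := by
  have h := hcone 2 (by norm_num) _
    (hconv hx hy (by norm_num : (0:ℝ) ≤ 1/2) (by norm_num : (0:ℝ) ≤ 1/2) (by norm_num))
  have : (2:ℝ) • ((1/2 : ℝ) • x + (1/2 : ℝ) • y) = x + y := by
    rw [smul_add, smul_smul, smul_smul]; norm_num
  rwa [this] at h

theorem collatzWielandt_inf_family
    {X : Type*} [NormedAddCommGroup X] [NormedSpace ℝ X] [CompleteSpace X]
    (C : Set X)
    (hclosed : IsClosed C) (hconv : Convex ℝ C)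
    (hcone : ∀ t : ℝ, 0 ≤ t → ∀ x ∈ C, t • x ∈ C)
    (hpointed : ∀ x ∈ C, -x ∈ C → x = 0)
    (hint : (interior C).Nonempty)
    {A : Type*} (f : A → X → X)
    (hhom : ∀ a : A, ∀ t : ℝ, 0 < t → ∀ x : X, f a (t • x) = t • f a x)
    (F : X → X)
    (hsel : ∀ x : X, ∃ a : A, F x = f a x ∧ ∀ b : A, f b x - f a x ∈ C) :
    collatzWielandt C F = ⨅ a : A, collatzWielandt C (f a) := by
  apply le_antisymm
  · refine le_iInf fun a => le_iInf₂ fun l hl => ?_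
    obtain ⟨hl0, x, hx, hle⟩ := hl
    obtain ⟨a₀, hF, hub⟩ := hsel x
    refine iInf₂_le l ⟨hl0, x, hx, ?_⟩
    have h := cone_add_mem hconv hcone hle (hub a)
    rw [hF]
    have : l • x - f a x + (f a x - f a₀ x) = l • x - f a₀ x := by abel
    rwa [this] at h
  · refine le_iInf₂ fun l hl => ?_
    obtain ⟨hl0, x, hx, hle⟩ := hl
    obtain ⟨a₀, hF, _⟩ := hsel x
    refine iInf_le_of_le a₀ (iInf₂_le l ⟨hl0, x, hx, ?_⟩)
    rwa [← hF]
end
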